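/- arXiv:1907.11874 — 2 statements merged into one kernel-verified Lean document; each statement's English description precedes it below -/
import Mathlib

section
/- A graph has exactly one positive adjacency eigenvalue if and only if its set of non-isolated vertices induces a complete multipartite graph (and is nonempty). -/
open SimpleGraph Finset

/-- Adjacency matrix over `ℝ` (classical decidability). -/
noncomputable def adjMatR {n : ℕ} (G : SimpleGraph (Fin n)) : Matrix (Fin n) (Fin n) ℝ :=
  @SimpleGraph.adjMatrix ℝ (Fin n) G (Classical.decRel _) _ _

lemma adjMatR_isHermitian {n : ℕ} (G : SimpleGraph (Fin n)) : (adjMatR G).IsHermitian := by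
  have h : (adjMatR G).IsSymm := @SimpleGraph.isSymm_adjMatrix ℝ (Fin n) G (Classical.decRel _) _ _
  unfold Matrix.IsHermitian
  rw [Matrix.conjTranspose_eq_transpose_of_trivial]
  exact h

/-- Multiset of adjacency eigenvalues (with multiplicity). -/
noncomputable def specMS {n : ℕ} (G : SimpleGraph (Fin n)) : Multiset ℝ :=
  Finset.univ.val.map (adjMatR_isHermitian G).eigenvalues

/-- `i`-th largest adjacency eigenvalue (0-indexed). -/
noncomputable def eigval {n : ℕ} (G : SimpleGraph (Fin n)) (i : ℕ) : ℝ :=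
  ((specMS G).sort (· ≥ ·)).getD i 0

/-- Graph energy. -/
noncomputable def energy {n : ℕ} (G : SimpleGraph (Fin n)) : ℝ :=
  ((specMS G).map (fun x => |x|)).sum

/-- ℓ¹ spectral distance. -/
noncomputable def specDist {n : ℕ} (G H : SimpleGraph (Fin n)) : ℝ :=
  ∑ i ∈ Finset.range n, |eigval G i - eigval H i|

/-- number of edges -/
noncomputable def numEdges {n : ℕ} (G : SimpleGraph (Fin n)) : ℕ := G.edgeSet.ncard

/-- `K_2 + (n-2)K_1`: one edge plus isolated vertices. -/
def oneEdgeG (n : ℕ) : SimpleGraph (Fin n) :=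
  SimpleGraph.fromRel (fun u v => (u : ℕ) = 0 ∧ (v : ℕ) = 1)

/-- `P_3 + (n-3)K_1`: a path on 3 vertices plus isolated vertices. -/
def path3G (n : ℕ) : SimpleGraph (Fin n) :=
  SimpleGraph.fromRel (fun u v => ((u : ℕ) = 0 ∧ (v : ℕ) = 1) ∨ ((u : ℕ) = 1 ∧ (v : ℕ) = 2))

/-- Complete bipartite graph `K_{a,b}` on `Fin (a+b)`. -/
def compBip (a b : ℕ) : SimpleGraph (Fin (a + b)) :=
  SimpleGraph.fromRel (fun u v => (u : ℕ) < a ∧ a ≤ (v : ℕ))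

/-- `K_{r,s} + tK_1`: complete bipartite plus `t` isolated vertices. -/
def compBipPlus (r s t : ℕ) : SimpleGraph (Fin (r + s + t)) :=
  SimpleGraph.fromRel (fun u v => (u : ℕ) < r ∧ r ≤ (v : ℕ) ∧ (v : ℕ) < r + s)

/-- `K_1 + K_{n-1}`: an isolated vertex plus a complete graph. -/
def k1PlusComplete (n : ℕ) : SimpleGraph (Fin n) :=
  SimpleGraph.fromRel (fun u v => (u : ℕ) ≠ 0 ∧ (v : ℕ) ≠ 0)

/-- `(K_1 + K_2) ∇ (n-3)K_1`: join of `K_1 + K_2` with `n-3` isolated vertices. -/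
def k1k2JoinEmpty (n : ℕ) : SimpleGraph (Fin n) :=
  SimpleGraph.fromRel (fun u v =>
    ((u : ℕ) = 1 ∧ (v : ℕ) = 2) ∨ ((u : ℕ) < 3 ∧ 3 ≤ (v : ℕ)))

/-!
If the non-isolated vertices induce a complete multipartite graph, then
`wᵀ A w = (∑ w)² - ∑ (sum of w over a part)²` with the first sum taken over the support. So the
quadratic form of `A` is negative semidefinite on the hyperplane where that sum vanishes, which
allows at most one positive eigenvalue; since `tr A = 0` and `A ≠ 0` there is at least one.

Conversely, with only one positive eigenvalue the form is positive definite on no plane. If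
non-adjacency were not transitive on the support there would be an edge `uw` and a vertex `v`
adjacent to neither but to some `z`, and the form is positive definite on the span of `e_u + e_w`
and `e_v + e_z / 2`. Hence non-adjacency is an equivalence relation on the support, and its
classes are the parts.
-/

theorem exists_ne_zero_mul_add_mul_eq_zero {R : Type*} [CommRing R] [Nontrivial R] (p q : R) :
    ∃ a b : R, (a ≠ 0 ∨ b ≠ 0) ∧ a * p + b * q = 0 := by
  by_cases hp : p = 0
  · exact ⟨1, 0, Or.inl one_ne_zero, by simp [hp]⟩
  · exact ⟨q, -p, Or.inr (neg_ne_zero.mpr hp), by ring⟩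

theorem Finset.sum_sum_ite_eq_mul_eq_sum_sq {ι β R : Type*} [Fintype ι] [DecidableEq β]
    [CommSemiring R] (g : ι → β) (W : ι → R) :
    ∑ u, ∑ v, (if g u = g v then W u * W v else 0) =
      ∑ c ∈ univ.image g, (∑ v with g v = c, W v) ^ 2 := by
  calc ∑ u, ∑ v, (if g u = g v then W u * W v else 0)
      = ∑ u, W u * ∑ v with g v = g u, W v := by
        refine sum_congr rfl fun u _ => ?_
        rw [mul_sum, sum_filter]
        exact sum_congr rfl fun v _ => by simp only [eq_comm]
    _ = ∑ c ∈ univ.image g, ∑ u with g u = c, W u * ∑ v with g v = g u, W v :=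
        (sum_fiberwise_of_maps_to (fun u _ => mem_image_of_mem g (mem_univ u)) _).symm
    _ = ∑ c ∈ univ.image g, (∑ v with g v = c, W v) ^ 2 := by
        refine sum_congr rfl fun c _ => ?_
        rw [sq, sum_mul]
        exact sum_congr rfl fun u hu => by rw [(mem_filter.mp hu).2]

theorem Equivalence.exists_surjective_fin {α : Type*} [Finite α] {r : α → α → Prop}
    (hr : Equivalence r) :
    ∃ (k : ℕ) (f : α → Fin k), Function.Surjective f ∧ ∀ a b, r a b ↔ f a = f b := by
  let s : Setoid α := ⟨r, hr⟩
  obtain ⟨k, ⟨e⟩⟩ := Finite.exists_equiv_fin (Quotient s)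
  refine ⟨k, fun a => e (Quotient.mk s a), e.surjective.comp Quotient.mk_surjective, fun a b => ?_⟩
  rw [e.injective.eq_iff, Quotient.eq]
  rfl

namespace Matrix

def HasPosDefPlane {n : Type*} [Fintype n] (A : Matrix n n ℝ) : Prop :=
  ∃ x y : n → ℝ, ∀ a b : ℝ, (a ≠ 0 ∨ b ≠ 0) → 0 < (a • x + b • y) ⬝ᵥ A *ᵥ (a • x + b • y)

namespace IsHermitian

variable {n : Type*} [Fintype n] [DecidableEq n] {A : Matrix n n ℝ} (hA : A.IsHermitian)

theorem dotProduct_mulVec_self_eq_sum (w : n → ℝ) :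
    w ⬝ᵥ A *ᵥ w =
      ∑ i, hA.eigenvalues i * (star (hA.eigenvectorUnitary : Matrix n n ℝ) *ᵥ w) i ^ 2 := by
  set U : Matrix n n ℝ := ↑hA.eigenvectorUnitary
  set c := star U *ᵥ w
  have hUt : star U = Uᵀ := by rw [star_eq_conjTranspose, conjTranspose_eq_transpose_of_trivial]
  have hdiag : Uᵀ * A * U = diagonal hA.eigenvalues := by
    have h := hA.conjStarAlgAut_star_eigenvectorUnitary
    rw [Unitary.conjStarAlgAut_star_apply] at h
    rw [← hUt]
    simpa using h
  have hw : w = U *ᵥ c := by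
    rw [mulVec_mulVec, mem_unitaryGroup_iff.mp hA.eigenvectorUnitary.2, one_mulVec]
  calc w ⬝ᵥ A *ᵥ w = c ⬝ᵥ (Uᵀ * A * U) *ᵥ c := by
        rw [hw, ← mulVec_mulVec, ← mulVec_mulVec, dotProduct_mulVec c, vecMul_transpose,
          dotProduct_comm]
    _ = ∑ i, hA.eigenvalues i * c i ^ 2 := by
        simp [hdiag, dotProduct, mulVec_diagonal, sq, mul_left_comm]

theorem exists_eigenvalues_pos_iff_ne_zero (htr : A.trace = 0) :
    (∃ i, 0 < hA.eigenvalues i) ↔ A ≠ 0 := by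
  rw [← not_iff_not, not_not, ← hA.eigenvalues_eq_zero_iff, not_exists]
  have hsum : ∑ i, hA.eigenvalues i = 0 := by simpa [hA.trace_eq_sum_eigenvalues] using htr
  refine ⟨fun hnonpos => funext fun i => ?_, fun h i => by simp [h]⟩
  exact (sum_eq_zero_iff_of_nonpos fun i _ => not_lt.mp (hnonpos i)).mp hsum i (mem_univ i)

theorem two_le_card_eigenvalues_pos_iff :
    2 ≤ #{i | 0 < hA.eigenvalues i} ↔ A.HasPosDefPlane := by
  set U : Matrix n n ℝ := ↑hA.eigenvectorUnitary with hU
  constructor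
  · intro h2
    obtain ⟨i, hi, j, hj, hij⟩ := one_lt_card.mp h2
    simp only [mem_filter, mem_univ, true_and] at hi hj
    refine ⟨hA.eigenvectorBasis i, hA.eigenvectorBasis j, fun a b hab => ?_⟩
    have hcoord : star U *ᵥ (a • ⇑(hA.eigenvectorBasis i) + b • ⇑(hA.eigenvectorBasis j)) =
        a • Pi.single i 1 + b • Pi.single j 1 := by
      simp only [U, mulVec_add, mulVec_smul, star_eigenvectorUnitary_mulVec]
    rw [hA.dotProduct_mulVec_self_eq_sum, hcoord, Fintype.sum_eq_add i j hij]
    · simp only [Pi.add_apply, Pi.smul_apply, Pi.single_eq_same, Pi.single_eq_of_ne hij,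
        Pi.single_eq_of_ne hij.symm, smul_eq_mul, mul_one, mul_zero, add_zero, zero_add]
      rcases hab with ha | hb
      · nlinarith [mul_pos hi (sq_pos_of_ne_zero ha), mul_nonneg hj.le (sq_nonneg b)]
      · nlinarith [mul_pos hj (sq_pos_of_ne_zero hb), mul_nonneg hi.le (sq_nonneg a)]
    · rintro k ⟨hki, hkj⟩
      simp [hki, hkj]
  · rintro ⟨x, y, hxy⟩
    by_contra! hlt
    obtain ⟨a, b, hab, hkill⟩ : ∃ a b : ℝ, (a ≠ 0 ∨ b ≠ 0) ∧
        ∀ i, 0 < hA.eigenvalues i → a * (star U *ᵥ x) i + b * (star U *ᵥ y) i = 0 := by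
      rcases (univ.filter fun i => 0 < hA.eigenvalues i).eq_empty_or_nonempty with
        hempty | ⟨i₀, hi₀⟩
      · refine ⟨1, 0, Or.inl one_ne_zero, fun i hi => ?_⟩
        simpa [hi] using (filter_eq_empty_iff.mp hempty) (mem_univ i)
      · obtain ⟨a, b, hab, h⟩ :=
          exists_ne_zero_mul_add_mul_eq_zero ((star U *ᵥ x) i₀) ((star U *ᵥ y) i₀)
        refine ⟨a, b, hab, fun i hi => ?_⟩
        rwa [card_le_one.mp (by omega) i (by simpa using hi) i₀ hi₀]
    refine (hxy a b hab).not_ge ?_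
    rw [hA.dotProduct_mulVec_self_eq_sum, ← hU]
    refine sum_nonpos fun i _ => ?_
    rcases le_or_gt (hA.eigenvalues i) 0 with hi | hi
    · exact mul_nonpos_of_nonpos_of_nonneg hi (sq_nonneg _)
    · simp [mulVec_add, mulVec_smul, hkill i hi]

theorem card_eigenvalues_pos_le_one_of_nonpos_on_hyperplane (t : n → ℝ)
    (h : ∀ w, t ⬝ᵥ w = 0 → w ⬝ᵥ A *ᵥ w ≤ 0) : #{i | 0 < hA.eigenvalues i} ≤ 1 := by
  by_contra! h2
  obtain ⟨x, y, hxy⟩ := hA.two_le_card_eigenvalues_pos_iff.mp h2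
  obtain ⟨a, b, hab, ht⟩ := exists_ne_zero_mul_add_mul_eq_zero (t ⬝ᵥ x) (t ⬝ᵥ y)
  refine (hxy a b hab).not_ge (h _ ?_)
  simpa [dotProduct_add, dotProduct_smul, mul_comm] using ht

end IsHermitian

end Matrix

namespace SimpleGraph

open Matrix

variable {V : Type*} (G : SimpleGraph V) [DecidableRel G.Adj]

theorem adjMatrix_eq_zero_iff (α : Type*) [Zero α] [One α] [NeZero (1 : α)] :
    G.adjMatrix α = 0 ↔ G = ⊥ := by
  refine ⟨fun h => ?_, fun h => ?_⟩
  · ext u v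
    simpa [adjMatrix_apply] using congr_fun (congr_fun h u) v
  · ext u v
    simp [adjMatrix_apply, h]

variable [Fintype V]

theorem dotProduct_adjMatrix_mulVec_nonpos {α : Type*} (f : G.support → α)
    (hf : ∀ u v : G.support, G.Adj u v ↔ f u ≠ f v) (w : V → ℝ)
    (hw : G.support.indicator (1 : V → ℝ) ⬝ᵥ w = 0) : w ⬝ᵥ G.adjMatrix ℝ *ᵥ w ≤ 0 := by
  classical
  set W := G.support.indicator w
  let g : V → Option α := fun v => if h : v ∈ G.support then some (f ⟨v, h⟩) else none
  have hentry : ∀ u v, (if G.Adj u v then w u * w v else 0) =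
      W u * W v - if g u = g v then W u * W v else 0 := by
    intro u v
    by_cases hu : u ∈ G.support
    · by_cases hv : v ∈ G.support
      · have := hf ⟨u, hu⟩ ⟨v, hv⟩
        simp only [W, g, Set.indicator_of_mem hu, Set.indicator_of_mem hv, dif_pos hu, dif_pos hv,
          Option.some_inj, this]
        split_ifs <;> simp_all
      · have : ¬ G.Adj u v := fun h => hv ⟨u, h.symm⟩
        simp [W, hv, this]
    · have : ¬ G.Adj u v := fun h => hu ⟨v, h⟩
      simp [W, hu, this]
  have hW : ∑ v, W v = 0 := by
    rw [← hw]
    exact sum_congr rfl fun v _ => by by_cases hv : v ∈ G.support <;> simp [W, hv]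
  rw [dotProduct_mulVec_adjMatrix]
  simp only [hentry, sum_sub_distrib, ← mul_sum, ← sum_mul, hW, zero_mul, zero_sub,
    sum_sum_ite_eq_mul_eq_sum_sq, neg_nonpos]
  positivity

variable [DecidableEq V]

theorem hasPosDefPlane_adjMatrix {u v w z : V} (huw : G.Adj u w) (huv : ¬G.Adj u v)
    (hvw : ¬G.Adj v w) (hvz : G.Adj v z) : (G.adjMatrix ℝ).HasPosDefPlane := by
  set s : ℝ := (if G.Adj u z then 1 else 0) + if G.Adj w z then 1 else 0
  have hs : 0 ≤ s ∧ s ≤ 2 := by simp only [s]; split_ifs <;> norm_num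
  set x : V → ℝ := Pi.single u 1 + Pi.single w 1
  set y : V → ℝ := Pi.single v 1 + (1 / 2 : ℝ) • Pi.single z 1
  refine ⟨x, y, fun a b hab => ?_⟩
  -- The weight `1 / 2` makes the discriminant `s ^ 2 - 8` of this form negative even for `s = 2`.
  have hform : (a • x + b • y) ⬝ᵥ G.adjMatrix ℝ *ᵥ (a • x + b • y) =
      2 * a ^ 2 + b ^ 2 + s * a * b := by
    simp only [mulVec_add, mulVec_smul, mulVec_single_one, dotProduct_add, add_dotProduct,
      smul_dotProduct, dotProduct_smul, single_dotProduct, col_apply, adjMatrix_apply, G.irrefl,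
      huw, huw.symm, huv, hvw, hvz, hvz.symm, G.adj_comm v u, G.adj_comm w v, G.adj_comm z u,
      G.adj_comm z w, if_true, if_false, smul_eq_mul, x, y, s]
    ring
  have hab : 0 < a ^ 2 + b ^ 2 := by
    rcases hab with h | h <;> nlinarith [sq_pos_of_ne_zero h, sq_nonneg a, sq_nonneg b]
  rw [hform]
  nlinarith [sq_nonneg (a + b), sq_nonneg (2 * a + s * b / 2),
    mul_nonneg hs.1 (sub_nonneg.mpr hs.2)]

theorem exists_fin_partition_support_of_not_hasPosDefPlane
    (h : ¬(G.adjMatrix ℝ).HasPosDefPlane) :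
    ∃ (k : ℕ) (f : G.support → Fin k), Function.Surjective f ∧
      ∀ u v : G.support, G.Adj u v ↔ f u ≠ f v := by
  have hequiv : Equivalence fun u v : G.support => ¬G.Adj u v :=
    ⟨fun _ => G.irrefl, fun huv hvu => huv hvu.symm, fun {u v w} huv hvw huw =>
      let ⟨_, hvz⟩ := v.2
      h (G.hasPosDefPlane_adjMatrix huw huv hvw hvz)⟩
  obtain ⟨k, f, hsurj, hf⟩ := hequiv.exists_surjective_fin
  exact ⟨k, f, hsurj, fun u v => by rw [ne_eq, ← hf, not_not]⟩

end SimpleGraph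

theorem adjMatR_eq {n : ℕ} (G : SimpleGraph (Fin n)) [DecidableRel G.Adj] :
    adjMatR G = G.adjMatrix ℝ := by
  unfold adjMatR
  congr

theorem card_filter_pos_specMS {n : ℕ} (G : SimpleGraph (Fin n)) :
    ((specMS G).filter (fun x => 0 < x)).card =
      #{i | 0 < (adjMatR_isHermitian G).eigenvalues i} := by
  rw [specMS, Multiset.filter_map, Multiset.card_map]
  rfl

theorem one_positive_eigenvalue_iff (n : ℕ) (G : SimpleGraph (Fin n)) :
    ((specMS G).filter (fun x => 0 < x)).card = 1 ↔
      (G.support.Nonempty ∧ ∃ (k : ℕ) (f : G.support → Fin k), Function.Surjective f ∧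
        ∀ u v : G.support, G.Adj u v ↔ f u ≠ f v) := by
  classical
  have htr : (adjMatR G).trace = 0 := by rw [adjMatR_eq]; exact G.trace_adjMatrix ℝ
  have hsupp : G.support.Nonempty ↔ 0 < #{i | 0 < (adjMatR_isHermitian G).eigenvalues i} := by
    simp only [card_pos, filter_nonempty_iff, mem_univ, true_and]
    rw [(adjMatR_isHermitian G).exists_eigenvalues_pos_iff_ne_zero htr, adjMatR_eq, ne_eq,
      adjMatrix_eq_zero_iff, ← support_eq_bot_iff, Set.nonempty_iff_ne_empty]
  rw [card_filter_pos_specMS]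
  constructor
  · intro h1
    refine ⟨hsupp.mpr (by omega), G.exists_fin_partition_support_of_not_hasPosDefPlane ?_⟩
    rw [← adjMatR_eq, ← (adjMatR_isHermitian G).two_le_card_eigenvalues_pos_iff]
    omega
  · rintro ⟨hne, k, f, -, hf⟩
    have hle := (adjMatR_isHermitian G).card_eigenvalues_pos_le_one_of_nonpos_on_hyperplane _
      fun w hw => by rw [adjMatR_eq]; exact G.dotProduct_adjMatrix_mulVec_nonpos f hf w hw
    have := hsupp.mp hne
    omega
end

section
/- For positive integers m, n, the ℓ¹-cospectrality cs(K_{m,n}) (minimum of σ(K_{m,n}, H) over graphs H on m+n vertices not isomorphic to K_{m,n}) is strictly positive if and only if among all factorizations xy = mn with x, y positive integers, the minimum of x + y is attained exactly at {x,y} = {m,n}. -/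
open SimpleGraph Finset

/-! The spectrum of a complete bipartite graph `K_{X,Y}` plus isolated vertices is
`{±√(|X||Y|), 0, …, 0}`, so it depends only on the product `|X||Y|`: any factorization
`xy = mn` with `x + y < m + n` yields a graph with an isolated vertex that is cospectral with
`K_{m,n}`. Conversely, a graph cospectral with `K_{m,n}` has an adjacency matrix of rank two,
hence is some `K_{X,Y}` plus isolated vertices, with `|X||Y| = mn` read off from the trace of
`A²`; if the factorization `{m, n}` minimizes `x + y`, there are no isolated vertices and the
graph is `K_{m,n}` itself. -/

namespace Matrix.IsHermitian

variable {n : Type*} [Fintype n] [DecidableEq n] {A : Matrix n n ℝ} (hA : A.IsHermitian)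
include hA

lemma trace_pow_eq_sum_eigenvalues_pow (k : ℕ) :
    (A ^ k).trace = ∑ i, hA.eigenvalues i ^ k := by
  conv_lhs => rw [hA.spectral_theorem, ← map_pow, Unitary.conjStarAlgAut_apply, trace_mul_cycle,
    Unitary.coe_star_mul_self, one_mul, diagonal_pow, trace_diagonal]
  simp

lemma eigenvalues_pow_three_of_pow_three_eq_smul {c : ℝ} (h : A ^ 3 = c • A) (i : n) :
    hA.eigenvalues i ^ 3 = c * hA.eigenvalues i := by
  rw [hA.spectral_theorem, ← map_pow, ← map_smul] at h
  have := congrFun₂ ((Unitary.conjStarAlgAut ℝ (Matrix n n ℝ) hA.eigenvectorUnitary).injective h) i i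
  simpa [diagonal_pow] using this

end Matrix.IsHermitian

/-- This is the vanishing of the `3 × 3` minor on rows `z, u, v` and columns `w, u, v`. -/
lemma Matrix.entry_eq_of_rank_le_two {n K : Type*} [Fintype n] [Field K] {A : Matrix n n K}
    (hA : A.rank ≤ 2) {u v : n} (huu : A u u = 0) (hvv : A v v = 0) (huv : A u v = 1)
    (hvu : A v u = 1) (z w : n) : A z w = A v w * A z u + A u w * A z v := by
  have hdet : (A.submatrix ![z, u, v] ![w, u, v]).det = 0 := by
    by_contra hne
    have h3 := (A.submatrix ![z, u, v] ![w, u, v]).rank_of_isUnit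
      ((isUnit_iff_isUnit_det _).mpr (Ne.isUnit hne))
    have hle := A.rank_submatrix_le ![z, u, v] ![w, u, v]
    rw [h3, Fintype.card_fin] at hle
    omega
  rw [det_fin_three] at hdet
  simp only [submatrix_apply, cons_val_zero, cons_val_one, cons_val, huu, hvv, huv, hvu] at hdet
  linear_combination -hdet

namespace Multiset

lemma eq_replicate_add_replicate_add_replicate {α : Type*} [DecidableEq α] {s : Multiset α}
    {a b c : α} (hab : a ≠ b) (hac : a ≠ c) (hbc : b ≠ c) (hs : ∀ x ∈ s, x = a ∨ x = b ∨ x = c) :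
    s = replicate (count a s) a + replicate (count b s) b + replicate (count c s) c := by
  ext x
  simp only [count_add, count_replicate]
  by_cases hx : x = a ∨ x = b ∨ x = c
  · rcases hx with rfl | rfl | rfl <;> simp [hab, hac, hbc, hab.symm, hac.symm, hbc.symm]
  · have hxs : x ∉ s := fun h => hx (hs x h)
    push Not at hx
    simp [count_eq_zero.mpr hxs, Ne.symm hx.1, Ne.symm hx.2.1, Ne.symm hx.2.2]

lemma eq_cons_neg_cons_replicate_zero {s : Multiset ℝ} {c : ℝ} (hc : c ≠ 0)
    (hs : ∀ x ∈ s, x = c ∨ x = -c ∨ x = 0) (hsum : s.sum = 0)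
    (hsq : (s.map (· ^ 2)).sum = 2 * c ^ 2) :
    s = c ::ₘ -c ::ₘ replicate (card s - 2) 0 := by
  have hcc : c ≠ -c := fun h => hc (by linarith)
  have hsplit := eq_replicate_add_replicate_add_replicate hcc hc (neg_ne_zero.mpr hc) hs
  set p := count c s
  set q := count (-c) s
  have hpq : (p : ℝ) = q := by
    rw [hsplit] at hsum
    simp only [sum_add, sum_replicate, nsmul_eq_mul, smul_neg] at hsum
    exact mul_right_cancel₀ hc (by linarith)
  have hpq2 : (p : ℝ) + q = 2 := by
    rw [hsplit] at hsq
    simp only [map_add, map_replicate, sum_add, sum_replicate, nsmul_eq_mul, neg_sq,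
      zero_pow two_ne_zero] at hsq
    exact mul_right_cancel₀ (pow_ne_zero 2 hc) (by linarith)
  have hp : p = 1 := by exact_mod_cast (by linarith : (p : ℝ) = 1)
  have hq : q = 1 := by exact_mod_cast (by linarith : (q : ℝ) = 1)
  rw [hsplit, hp, hq]
  simp

end Multiset

lemma Nat.eq_and_eq_or_eq_and_eq_of_add_eq_of_mul_eq {x y m n : ℕ} (hs : x + y = m + n)
    (hp : x * y = m * n) : x = m ∧ y = n ∨ x = n ∧ y = m := by
  have hs' : (x : ℤ) + y = m + n := by exact_mod_cast hs
  have hp' : (x : ℤ) * y = m * n := by exact_mod_cast hp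
  have h : ((x : ℤ) - m) * ((x : ℤ) - n) = 0 := by linear_combination (x : ℤ) * hs' - hp'
  rcases eq_zero_or_eq_zero_of_mul_eq_zero h with h | h
  · exact Or.inl ⟨by omega, by omega⟩
  · exact Or.inr ⟨by omega, by omega⟩

namespace Finset

variable {V : Type*} [Fintype V] [DecidableEq V]

lemma exists_disjoint_card_eq_card_eq {x y : ℕ} (h : x + y ≤ Fintype.card V) :
    ∃ X Y : Finset V, Disjoint X Y ∧ #X = x ∧ #Y = y := by
  obtain ⟨X, -, hX⟩ := exists_subset_card_eq (s := (univ : Finset V)) (n := x) (by simp; omega)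
  obtain ⟨Y, hY, hYc⟩ := exists_subset_card_eq (s := Xᶜ) (n := y) (by rw [card_compl, hX]; omega)
  exact ⟨X, Y, disjoint_of_subset_right hY disjoint_compl_right, hX, hYc⟩

lemma eq_compl_of_disjoint_of_card_add_card_eq {X Y : Finset V} (h : Disjoint X Y)
    (hcard : #X + #Y = Fintype.card V) : Y = Xᶜ :=
  eq_of_subset_of_card_le (subset_compl_iff_disjoint_left.mpr h) (by rw [card_compl]; omega)

end Finset

section Spectrum

variable {N : ℕ}

lemma adjMatR_apply (G : SimpleGraph (Fin N)) [DecidableRel G.Adj] (u v : Fin N) :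
    adjMatR G u v = if G.Adj u v then 1 else 0 := by
  by_cases h : G.Adj u v <;> simp [adjMatR, h]

lemma card_specMS (G : SimpleGraph (Fin N)) : Multiset.card (specMS G) = N := by
  simp [specMS]

lemma sum_map_pow_specMS (G : SimpleGraph (Fin N)) (k : ℕ) :
    ((specMS G).map (· ^ k)).sum = (adjMatR G ^ k).trace := by
  rw [(adjMatR_isHermitian G).trace_pow_eq_sum_eigenvalues_pow, specMS, Multiset.map_map]
  rfl

lemma rank_adjMatR_eq_card_filter_specMS (G : SimpleGraph (Fin N)) :
    (adjMatR G).rank = Multiset.card ((specMS G).filter (· ≠ 0)) := by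
  rw [(adjMatR_isHermitian G).rank_eq_card_non_zero_eigs, Fintype.card_subtype, specMS,
    Multiset.filter_map, Multiset.card_map]
  rfl

lemma specMS_eq_of_adjMatR_pow_three_eq_smul {G : SimpleGraph (Fin N)} {c : ℝ} (hc : c ≠ 0)
    (hcube : adjMatR G ^ 3 = c ^ 2 • adjMatR G) (hsq : (adjMatR G ^ 2).trace = 2 * c ^ 2) :
    specMS G = c ::ₘ -c ::ₘ Multiset.replicate (N - 2) 0 := by
  have hA := adjMatR_isHermitian G
  have key := Multiset.eq_cons_neg_cons_replicate_zero hc ?_ ?_ (by rwa [sum_map_pow_specMS])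
  · rwa [card_specMS] at key
  · simp only [specMS, Multiset.mem_map]
    rintro _ ⟨i, -, rfl⟩
    have hfac : hA.eigenvalues i * (hA.eigenvalues i - c) * (hA.eigenvalues i + c) = 0 := by
      linear_combination hA.eigenvalues_pow_three_of_pow_three_eq_smul hcube i
    rcases mul_eq_zero.mp hfac with h | h
    · rcases mul_eq_zero.mp h with h | h
      · exact Or.inr (Or.inr h)
      · exact Or.inl (sub_eq_zero.mp h)
    · exact Or.inr (Or.inl (eq_neg_of_add_eq_zero_left h))
  · have := sum_map_pow_specMS G 1
    simp only [pow_one, Multiset.map_id'] at this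
    rw [this]
    exact @SimpleGraph.trace_adjMatrix ℝ (Fin N) G (Classical.decRel _) _ _ _

variable {G H : SimpleGraph (Fin N)}

lemma specDist_eq_zero_iff : specDist G H = 0 ↔ specMS G = specMS H := by
  refine ⟨fun h => ?_, fun h => by simp [specDist, eigval, h]⟩
  have heq : ∀ i < N, eigval G i = eigval H i := fun i hi =>
    sub_eq_zero.mp <| abs_eq_zero.mp <|
      (Finset.sum_eq_zero_iff_of_nonneg (fun _ _ => abs_nonneg _)).mp h i (mem_range.mpr hi)
  rw [← Multiset.sort_eq (specMS G) (· ≥ ·), ← Multiset.sort_eq (specMS H) (· ≥ ·)]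
  congr 1
  refine List.ext_getElem (by simp [card_specMS]) fun i hiG hiH => ?_
  have := heq i (by simpa [card_specMS] using hiG)
  rwa [eigval, eigval, List.getD_eq_getElem _ _ hiG, List.getD_eq_getElem _ _ hiH] at this

lemma specDist_pos_iff : 0 < specDist G H ↔ specMS G ≠ specMS H := by
  rw [ne_eq, ← specDist_eq_zero_iff]
  exact (sum_nonneg fun _ _ => abs_nonneg _).lt_iff_ne'

end Spectrum

namespace SimpleGraph

variable {V : Type*}

def completeBipartiteOn (X Y : Finset V) : SimpleGraph V :=
  fromRel fun u v => u ∈ X ∧ v ∈ Y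

variable {X Y : Finset V}

lemma completeBipartiteOn_adj (h : Disjoint X Y) {u v : V} :
    (completeBipartiteOn X Y).Adj u v ↔ u ∈ X ∧ v ∈ Y ∨ u ∈ Y ∧ v ∈ X := by
  have := Finset.disjoint_left.mp h
  rw [completeBipartiteOn, fromRel_adj]
  grind

lemma completeBipartiteOn_comm : completeBipartiteOn X Y = completeBipartiteOn Y X := by
  ext u v
  simp only [completeBipartiteOn, fromRel_adj]
  tauto

lemma not_adj_completeBipartiteOn {u : V} (huX : u ∉ X) (huY : u ∉ Y) (v : V) :
    ¬ (completeBipartiteOn X Y).Adj u v := by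
  simp only [completeBipartiteOn, fromRel_adj]
  tauto

variable [Fintype V] [DecidableEq V]

lemma completeBipartiteOn_compl_adj {u v : V} :
    (completeBipartiteOn X Xᶜ).Adj u v ↔ (u ∈ X ↔ v ∉ X) := by
  rw [completeBipartiteOn_adj (disjoint_compl_right : Disjoint X Xᶜ), mem_compl, mem_compl]
  tauto

lemma exists_adj_completeBipartiteOn_compl (hX : X.Nonempty) (hXc : Xᶜ.Nonempty) (u : V) :
    ∃ v, (completeBipartiteOn X Xᶜ).Adj u v := by
  simp only [completeBipartiteOn_compl_adj]
  by_cases hu : u ∈ X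
  · obtain ⟨v, hv⟩ := hXc
    exact ⟨v, iff_of_true hu (mem_compl.mp hv)⟩
  · obtain ⟨v, hv⟩ := hX
    exact ⟨v, iff_of_false hu (not_not.mpr hv)⟩

lemma nonempty_iso_completeBipartiteOn_compl {P : Finset V} (h : #X = #P) :
    Nonempty (completeBipartiteOn X Xᶜ ≃g completeBipartiteOn P Pᶜ) := by
  let e₁ : {v // v ∈ X} ≃ {v // v ∈ P} := equivOfCardEq h
  let e₂ : {v // v ∉ X} ≃ {v // v ∉ P} := Fintype.equivOfCardEq <| by
    rw [Fintype.card_subtype_compl, Fintype.card_subtype_compl, Fintype.card_coe,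
      Fintype.card_coe, h]
  let e := e₁.subtypeCongr e₂
  have he : ∀ v, e v ∈ P ↔ v ∈ X := fun v => by
    by_cases hv : v ∈ X
    · simp [e, Equiv.subtypeCongr, Equiv.sumCompl, hv]
    · simpa [e, Equiv.subtypeCongr, Equiv.sumCompl, hv] using (e₂ ⟨v, hv⟩).2
  exact ⟨⟨e, by simp only [completeBipartiteOn_compl_adj, he, implies_true]⟩⟩

lemma nonempty_iso_completeBipartiteOn_compl_of_card_eq {P : Finset V} (h : Disjoint X Y)
    (hcard : #X + #Y = Fintype.card V) (hP : #X = #P ∨ #Y = #P) :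
    Nonempty (completeBipartiteOn X Y ≃g completeBipartiteOn P Pᶜ) := by
  obtain rfl := eq_compl_of_disjoint_of_card_add_card_eq h hcard
  rcases hP with hP | hP
  · exact nonempty_iso_completeBipartiteOn_compl hP
  · simpa only [compl_compl, completeBipartiteOn_comm (X := Xᶜ)] using
      nonempty_iso_completeBipartiteOn_compl (X := Xᶜ) hP

end SimpleGraph

section CompleteBipartiteSpectrum

open SimpleGraph Matrix

def indicatorVec {V : Type*} [DecidableEq V] (X : Finset V) : V → ℝ :=
  fun v => if v ∈ X then 1 else 0

lemma indicatorVec_dotProduct {V : Type*} [Fintype V] [DecidableEq V] (X Y : Finset V) :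
    indicatorVec X ⬝ᵥ indicatorVec Y = #(X ∩ Y) := by
  simp [indicatorVec, dotProduct, inter_comm]

variable {N : ℕ} {X Y : Finset (Fin N)}

lemma adjMatR_completeBipartiteOn (h : Disjoint X Y) :
    adjMatR (completeBipartiteOn X Y) =
      vecMulVec (indicatorVec X) (indicatorVec Y) + vecMulVec (indicatorVec Y) (indicatorVec X) := by
  classical
  ext u v
  have := Finset.disjoint_left.mp h
  simp only [adjMatR_apply, completeBipartiteOn_adj h, Matrix.add_apply, vecMulVec_apply,
    indicatorVec]
  split_ifs <;> grind

lemma adjMatR_completeBipartiteOn_sq (h : Disjoint X Y) :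
    adjMatR (completeBipartiteOn X Y) ^ 2 =
      (#Y : ℝ) • vecMulVec (indicatorVec X) (indicatorVec X) +
        (#X : ℝ) • vecMulVec (indicatorVec Y) (indicatorVec Y) := by
  simp [sq, adjMatR_completeBipartiteOn h, add_mul, mul_add, vecMulVec_mul_vecMulVec,
    indicatorVec_dotProduct, disjoint_iff_inter_eq_empty.mp h, disjoint_iff_inter_eq_empty.mp h.symm,
    add_comm]

lemma adjMatR_completeBipartiteOn_pow_three (h : Disjoint X Y) :
    adjMatR (completeBipartiteOn X Y) ^ 3 =
      ((#X : ℝ) * #Y) • adjMatR (completeBipartiteOn X Y) := by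
  rw [pow_succ, adjMatR_completeBipartiteOn_sq h, adjMatR_completeBipartiteOn h]
  simp [add_mul, mul_add, vecMulVec_mul_vecMulVec, indicatorVec_dotProduct,
    disjoint_iff_inter_eq_empty.mp h, disjoint_iff_inter_eq_empty.mp h.symm, smul_smul, mul_comm]

lemma trace_adjMatR_completeBipartiteOn_sq (h : Disjoint X Y) :
    (adjMatR (completeBipartiteOn X Y) ^ 2).trace = 2 * ((#X : ℝ) * #Y) := by
  simp only [adjMatR_completeBipartiteOn_sq h, trace_add, trace_smul, trace_vecMulVec,
    indicatorVec_dotProduct, inter_self, smul_eq_mul]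
  ring

lemma specMS_completeBipartiteOn (h : Disjoint X Y) (hX : X.Nonempty) (hY : Y.Nonempty) :
    specMS (completeBipartiteOn X Y) =
      √(#X * #Y) ::ₘ -√(#X * #Y) ::ₘ Multiset.replicate (N - 2) 0 := by
  have hpos : (0 : ℝ) < #X * #Y := by
    have := hX.card_pos; have := hY.card_pos; positivity
  apply specMS_eq_of_adjMatR_pow_three_eq_smul (Real.sqrt_pos.mpr hpos).ne' <;>
    rw [Real.sq_sqrt hpos.le]
  · exact adjMatR_completeBipartiteOn_pow_three h
  · exact trace_adjMatR_completeBipartiteOn_sq h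

lemma rank_adjMatR_completeBipartiteOn (h : Disjoint X Y) (hX : X.Nonempty) (hY : Y.Nonempty) :
    (adjMatR (completeBipartiteOn X Y)).rank = 2 := by
  have hpos : (0 : ℝ) < #X * #Y := by
    have := hX.card_pos; have := hY.card_pos; positivity
  have hc := (Real.sqrt_pos.mpr hpos).ne'
  rw [rank_adjMatR_eq_card_filter_specMS, specMS_completeBipartiteOn h hX hY]
  simp only [Multiset.filter_cons, ne_eq, hc, neg_eq_zero, not_false_eq_true, if_true]
  simp [Multiset.filter_eq_nil.mpr fun _ ha => not_not.mpr (Multiset.eq_of_mem_replicate ha)]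

lemma specMS_completeBipartiteOn_eq_of_card_mul_eq {X' Y' : Finset (Fin N)} (h : Disjoint X Y)
    (hX : X.Nonempty) (hY : Y.Nonempty) (h' : Disjoint X' Y') (hX' : X'.Nonempty)
    (hY' : Y'.Nonempty) (hcard : #X * #Y = #X' * #Y') :
    specMS (completeBipartiteOn X Y) = specMS (completeBipartiteOn X' Y') := by
  have hcard' : (#X : ℝ) * #Y = #X' * #Y' := by exact_mod_cast hcard
  rw [specMS_completeBipartiteOn h hX hY, specMS_completeBipartiteOn h' hX' hY', hcard']

lemma exists_not_iso_specMS_eq_completeBipartiteOn_compl {P : Finset (Fin N)}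
    (hP : P.Nonempty) (hPc : Pᶜ.Nonempty) {x y : ℕ} (hx : 0 < x) (hy : 0 < y)
    (hxy : x * y = #P * #Pᶜ) (hlt : x + y < N) :
    ∃ H : SimpleGraph (Fin N), ¬ Nonempty (H ≃g completeBipartiteOn P Pᶜ) ∧
      specMS (completeBipartiteOn P Pᶜ) = specMS H := by
  obtain ⟨X, Y, hd, rfl, rfl⟩ := exists_disjoint_card_eq_card_eq (V := Fin N) (x := x) (y := y)
    (by simp only [Fintype.card_fin]; omega)
  obtain ⟨w, -, hw⟩ := exists_mem_notMem_of_card_lt_card (s := X ∪ Y) (t := univ)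
    (by simpa [card_union_of_disjoint hd] using hlt)
  rw [mem_union, not_or] at hw
  refine ⟨completeBipartiteOn X Y, fun ⟨e⟩ => ?_,
    specMS_completeBipartiteOn_eq_of_card_mul_eq disjoint_compl_right hP hPc hd
      (card_pos.mp hx) (card_pos.mp hy) hxy.symm⟩
  obtain ⟨z, hz⟩ := exists_adj_completeBipartiteOn_compl hP hPc (e w)
  exact not_adj_completeBipartiteOn hw.1 hw.2 (e.symm z) (e.map_adj_iff.mp (by simpa using hz))

lemma exists_eq_completeBipartiteOn_of_rank_le_two {H : SimpleGraph (Fin N)}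
    (hrank : (adjMatR H).rank ≤ 2) {u v : Fin N} (huv : H.Adj u v) :
    ∃ X Y : Finset (Fin N), Disjoint X Y ∧ u ∈ X ∧ v ∈ Y ∧ H = completeBipartiteOn X Y := by
  classical
  have key : ∀ z w, (if H.Adj z w then (1 : ℝ) else 0) =
      (if H.Adj v w then 1 else 0) * (if H.Adj z u then 1 else 0) +
        (if H.Adj u w then 1 else 0) * (if H.Adj z v then 1 else 0) := by
    simpa only [adjMatR_apply] using
      entry_eq_of_rank_le_two hrank (by simp [adjMatR_apply]) (by simp [adjMatR_apply])
        (by simp [adjMatR_apply, huv]) (by simp [adjMatR_apply, huv.symm])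
  have hdisj : Disjoint (univ.filter (H.Adj v)) (univ.filter (H.Adj u)) := by
    refine Finset.disjoint_left.mpr fun w hv hu => ?_
    simp only [mem_filter, mem_univ, true_and] at hv hu
    have := key w w
    norm_num [hv, hu, hv.symm, hu.symm] at this
  refine ⟨_, _, hdisj, by simpa using huv.symm, by simpa using huv, ?_⟩
  ext z w
  have := key z w
  simp only [completeBipartiteOn_adj hdisj, mem_filter, mem_univ, true_and]
  split_ifs at this <;> grind [adj_comm]

lemma exists_eq_completeBipartiteOn_of_specMS_eq {H : SimpleGraph (Fin N)} (hd : Disjoint X Y)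
    (hX : X.Nonempty) (hY : Y.Nonempty) (h : specMS H = specMS (completeBipartiteOn X Y)) :
    ∃ X' Y' : Finset (Fin N), Disjoint X' Y' ∧ X'.Nonempty ∧ Y'.Nonempty ∧
      H = completeBipartiteOn X' Y' ∧ #X' * #Y' = #X * #Y := by
  classical
  have hrank : (adjMatR H).rank = 2 := by
    rw [rank_adjMatR_eq_card_filter_specMS, h, ← rank_adjMatR_eq_card_filter_specMS,
      rank_adjMatR_completeBipartiteOn hd hX hY]
  obtain ⟨u, v, huv⟩ : ∃ u v, H.Adj u v := by
    by_contra! hno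
    have : adjMatR H = 0 := by ext u v; simp [adjMatR_apply, hno]
    simp [this] at hrank
  obtain ⟨X', Y', hd', hu, hv, rfl⟩ := exists_eq_completeBipartiteOn_of_rank_le_two hrank.le huv
  refine ⟨X', Y', hd', ⟨u, hu⟩, ⟨v, hv⟩, rfl, ?_⟩
  have htrace := congrArg (fun s => (s.map (· ^ 2)).sum) h
  simp only [sum_map_pow_specMS, trace_adjMatR_completeBipartiteOn_sq hd',
    trace_adjMatR_completeBipartiteOn_sq hd] at htrace
  exact_mod_cast (by linarith : ((#X' : ℝ) * #Y') = #X * #Y)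

lemma compBip_eq_completeBipartiteOn (m n : ℕ) :
    compBip m n = completeBipartiteOn ({u | (u : ℕ) < m} : Finset (Fin (m + n)))
      ({u | (u : ℕ) < m} : Finset (Fin (m + n)))ᶜ := by
  ext u v
  simp [compBip, completeBipartiteOn]

end CompleteBipartiteSpectrum

theorem cs_compBip_pos_iff (m n : ℕ) (hm : 0 < m) (hn : 0 < n) :
    (∀ H : SimpleGraph (Fin (m + n)), ¬ Nonempty (H ≃g compBip m n) →
        0 < specDist (compBip m n) H) ↔
      (∀ x y : ℕ, 0 < x → 0 < y → x * y = m * n →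
        m + n ≤ x + y ∧ (x + y = m + n → (x = m ∧ y = n) ∨ (x = n ∧ y = m))) := by
  simp only [compBip_eq_completeBipartiteOn, specDist_pos_iff]
  set P : Finset (Fin (m + n)) := {u | (u : ℕ) < m}
  have hP : #P = m := by simp [P, Fin.card_filter_val_lt]
  have hPc : #Pᶜ = n := by rw [card_compl, hP, Fintype.card_fin]; omega
  have hPne : P.Nonempty := card_pos.mp (by omega)
  have hPcne : Pᶜ.Nonempty := card_pos.mp (by omega)
  constructor
  · intro h x y hx hy hxy
    refine ⟨not_lt.mp fun hlt => ?_, fun hs => Nat.eq_and_eq_or_eq_and_eq_of_add_eq_of_mul_eq hs hxy⟩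
    obtain ⟨H, hH, hspec⟩ := exists_not_iso_specMS_eq_completeBipartiteOn_compl hPne hPcne hx hy
      (by rw [hP, hPc, hxy]) hlt
    exact h H hH hspec
  · intro h H hH hspec
    obtain ⟨X, Y, hd, hX, hY, rfl, hcard⟩ :=
      exists_eq_completeBipartiteOn_of_specMS_eq disjoint_compl_right hPne hPcne hspec.symm
    obtain ⟨hle, hsum⟩ := h #X #Y hX.card_pos hY.card_pos (by rw [hcard, hP, hPc])
    have hXY : #X + #Y = m + n := le_antisymm
      (by simpa [card_union_of_disjoint hd] using card_le_univ (X ∪ Y)) hle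
    refine hH (nonempty_iso_completeBipartiteOn_compl_of_card_eq hd (by simpa using hXY) ?_)
    rcases hsum hXY with ⟨hXm, -⟩ | ⟨-, hYm⟩
    exacts [Or.inl (hXm.trans hP.symm), Or.inr (hYm.trans hP.symm)]
end
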